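/- In B_6, with b = σ_1σ_3^{−1} and r = α^2σ_1^{−10} where α = σ_1⋯σ_5 and a = σ_1σ_2^{−1}, one has σ_1σ_4^{−1} = b^{−9}·r·a·r^{−1}·b^{10}. -/

import Mathlib

/-!
Conjugation by `α` shifts indices, `α σ_i α⁻¹ = σ_{i+1}`: pushed through `σ_1 ⋯ σ_{n-1}`,
`σ_i` commutes past the far generators, and the braid relation turns `σ_i σ_{i+1} σ_i` into
`σ_{i+1} σ_i σ_{i+1}`. Hence `r a r⁻¹ = α² (σ_1⁻⁹ σ_2⁻¹ σ_1¹⁰) α⁻² = σ_3⁻⁹ σ_4⁻¹ σ_3¹⁰`.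
Since `σ_1` commutes with `σ_3`, `b^k = σ_1^k σ_3^{-k}`, so sandwiching between `b⁻⁹` and `b¹⁰`
trades the powers of `σ_3` for powers of `σ_1`; as `σ_1` also commutes with `σ_4`, what is left,
`σ_1⁻⁹ σ_4⁻¹ σ_1¹⁰`, is `σ_1 σ_4⁻¹`.
-/

/-- Artin braid relators for the braid group on `n` strands, with generators
`FreeGroup.of i` corresponding to `σ_{i+1}` for `i : Fin (n-1)`. -/
def braidRels (n : ℕ) : Set (FreeGroup (Fin (n - 1))) :=
  {r | ∃ i j : Fin (n - 1),
      ((j : ℕ) ≥ (i : ℕ) + 2 ∧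
        r = FreeGroup.of i * FreeGroup.of j * (FreeGroup.of i)⁻¹ * (FreeGroup.of j)⁻¹) ∨
      ((j : ℕ) = (i : ℕ) + 1 ∧
        r = FreeGroup.of i * FreeGroup.of j * FreeGroup.of i *
          (FreeGroup.of j * FreeGroup.of i * FreeGroup.of j)⁻¹)}

/-- The braid group on `n` strands. -/
def BraidGroup (n : ℕ) : Type := PresentedGroup (braidRels n)

instance (n : ℕ) : Group (BraidGroup n) :=
  inferInstanceAs (Group (PresentedGroup (braidRels n)))

/-- The Artin generator `σ_i` of `BraidGroup n`, for `1 ≤ i ≤ n-1` (junk value `1` otherwise). -/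
def σ {n : ℕ} (i : ℕ) : BraidGroup n :=
  if h : 1 ≤ i ∧ i < n then PresentedGroup.of (⟨i - 1, by omega⟩ : Fin (n - 1)) else 1

/-- The element `α = σ_1 σ_2 ⋯ σ_{n-1}`. -/
def α (n : ℕ) : BraidGroup n := ((List.range (n - 1)).map (fun i => σ (i + 1))).prod

/-- The half-twist `σ_j` for an index `j` taken modulo `n`, defined by conjugating
`σ_1` by the rotation `α`: `σ_{1+m} = α^m σ_1 α^{-m}`. -/
def σm {n : ℕ} (j : ℤ) : BraidGroup n := (α n) ^ (j - 1) * σ 1 * (α n) ^ (1 - j)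

namespace BraidGroup

variable {n : ℕ}

lemma σ_eq_of {i : ℕ} (hi : 1 ≤ i) (hin : i < n) :
    (σ i : BraidGroup n) = PresentedGroup.of (⟨i - 1, by omega⟩ : Fin (n - 1)) :=
  dif_pos ⟨hi, hin⟩

lemma commute_σ_σ {i j : ℕ} (hi : 1 ≤ i) (hij : i + 2 ≤ j) (hjn : j < n) :
    Commute (σ i : BraidGroup n) (σ j) := by
  rw [σ_eq_of hi (by omega), σ_eq_of (by omega) hjn]
  refine PresentedGroup.mk_eq_mk_of_mul_inv_mem ⟨⟨i - 1, by omega⟩, ⟨j - 1, by omega⟩, ?_⟩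
  exact Or.inl ⟨by simp only; omega, by group⟩

lemma σ_mul_σ_mul_σ {i : ℕ} (hi : 1 ≤ i) (hin : i + 1 < n) :
    (σ i : BraidGroup n) * σ (i + 1) * σ i = σ (i + 1) * σ i * σ (i + 1) := by
  rw [σ_eq_of hi (by omega), σ_eq_of (by omega) hin]
  exact PresentedGroup.mk_eq_mk_of_mul_inv_mem
    ⟨⟨i - 1, by omega⟩, ⟨i, by omega⟩, Or.inr ⟨by simp only; omega, rfl⟩⟩

lemma α_eq_prod_range' : α n = ((List.range' 1 (n - 1)).map σ).prod := by
  simp only [α, List.range'_eq_map_range, List.map_map, Function.comp_def, Nat.add_comm 1]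

lemma α_eq_prod_mul_σ_mul_σ_mul_prod {i : ℕ} (hi : 1 ≤ i) (hin : i + 1 < n) :
    α n = ((List.range' 1 (i - 1)).map σ).prod *
      (σ i * (σ (i + 1) * ((List.range' (i + 2) (n - i - 2)).map σ).prod)) := by
  obtain ⟨k, rfl⟩ : ∃ k, n = i + 2 + k := ⟨n - i - 2, by omega⟩
  rw [α_eq_prod_range', show i + 2 + k - 1 = (i - 1) + (k + 1 + 1) by omega,
    ← List.range'_append, List.range'_succ, List.range'_succ]
  simp only [one_mul, Nat.add_sub_cancel' hi, show i + 2 + k - i - 2 = k by omega,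
    List.map_append, List.prod_append, List.map_cons, List.prod_cons]

lemma semiconjBy_α_σ {i : ℕ} (hi : 1 ≤ i) (hin : i + 1 < n) :
    SemiconjBy (α n) (σ i) (σ (i + 1)) := by
  rw [α_eq_prod_mul_σ_mul_σ_mul_prod hi hin]
  set P := ((List.range' 1 (i - 1)).map σ).prod
  set Q := ((List.range' (i + 2) (n - i - 2)).map σ).prod
  have hP : Commute P (σ (i + 1) : BraidGroup n) := by
    refine Commute.list_prod_left _ _ fun x hx => ?_
    obtain ⟨j, hj, rfl⟩ := List.mem_map.mp hx
    rw [List.mem_range'_1] at hj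
    exact commute_σ_σ hj.1 (by omega) hin
  have hQ : Commute (σ i : BraidGroup n) Q := by
    refine Commute.list_prod_right _ _ fun x hx => ?_
    obtain ⟨j, hj, rfl⟩ := List.mem_map.mp hx
    rw [List.mem_range'_1] at hj
    exact commute_σ_σ hi hj.1 (by omega)
  calc P * (σ i * (σ (i + 1) * Q)) * σ i = P * (σ i * σ (i + 1) * σ i) * Q := by
        simp only [mul_assoc, ← hQ.eq]
    _ = P * (σ (i + 1) * σ i * σ (i + 1)) * Q := by rw [σ_mul_σ_mul_σ hi hin]
    _ = σ (i + 1) * (P * (σ i * (σ (i + 1) * Q))) := by simp only [← mul_assoc, hP.eq]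

lemma semiconjBy_α_pow_σ {i k : ℕ} (hi : 1 ≤ i) (hin : i + k < n) :
    SemiconjBy (α n ^ k) (σ i) (σ (i + k)) := by
  induction k with
  | zero => rw [pow_zero]; exact SemiconjBy.one_left _
  | succ k ih =>
    rw [pow_succ']
    exact (semiconjBy_α_σ (i := i + k) (by omega) hin).mul_left (ih (by omega))

end BraidGroup

section Group

variable {G : Type*} [Group G]

lemma conj_mul_inv_eq_of_semiconjBy {g s t y z : G} (hs : SemiconjBy g s y)
    (ht : SemiconjBy g t z) (m : ℕ) :
    g * (s ^ (m + 1))⁻¹ * (s * t⁻¹) * (g * (s ^ (m + 1))⁻¹)⁻¹ =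
      (y ^ m)⁻¹ * z⁻¹ * y ^ (m + 1) := by
  have h : SemiconjBy g ((s ^ m)⁻¹ * t⁻¹ * s ^ (m + 1)) ((y ^ m)⁻¹ * z⁻¹ * y ^ (m + 1)) :=
    ((hs.pow_right m).inv_right.mul_right ht.inv_right).mul_right (hs.pow_right (m + 1))
  calc g * (s ^ (m + 1))⁻¹ * (s * t⁻¹) * (g * (s ^ (m + 1))⁻¹)⁻¹
      = g * ((s ^ m)⁻¹ * t⁻¹ * s ^ (m + 1)) * g⁻¹ := by group
    _ = (y ^ m)⁻¹ * z⁻¹ * y ^ (m + 1) := by rw [h.eq, mul_inv_cancel_right]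

lemma mul_inv_pow_conj_eq_of_commute {x y w : G} (hxy : Commute x y) (hxw : Commute x w)
    (m : ℕ) :
    ((x * y⁻¹) ^ m)⁻¹ * ((y ^ m)⁻¹ * w * y ^ (m + 1)) * (x * y⁻¹) ^ (m + 1) = x * w := by
  have hyc : Commute y (x * y⁻¹) := hxy.symm.mul_right (Commute.refl y).inv_right
  have hx : y * (x * y⁻¹) = x := by rw [← mul_assoc, ← hxy.eq, mul_inv_cancel_right]
  calc ((x * y⁻¹) ^ m)⁻¹ * ((y ^ m)⁻¹ * w * y ^ (m + 1)) * (x * y⁻¹) ^ (m + 1)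
      = ((y * (x * y⁻¹)) ^ m)⁻¹ * w * (y * (x * y⁻¹)) ^ (m + 1) := by
        rw [hyc.mul_pow, hyc.mul_pow]; group
    _ = (x ^ m)⁻¹ * w * x ^ m * x := by rw [hx, pow_succ, mul_assoc _ (x ^ m)]
    _ = x * w := by
        rw [mul_assoc (x ^ m)⁻¹, ← (hxw.pow_left m).eq, inv_mul_cancel_left, hxw.eq]

end Group

theorem B6_sigma14_identity :
    ∀ a b r : BraidGroup 6, a = σ 1 * (σ 2)⁻¹ → b = σ 1 * (σ 3)⁻¹ →
      r = (α 6) ^ 2 * ((σ 1 : BraidGroup 6) ^ 10)⁻¹ →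
      σ 1 * (σ 4)⁻¹ = (b ^ 9)⁻¹ * r * a * r⁻¹ * b ^ 10 := by
  rintro a b r rfl rfl rfl
  have h13 : SemiconjBy (α 6 ^ 2) (σ 1) (σ 3) :=
    BraidGroup.semiconjBy_α_pow_σ le_rfl (by norm_num)
  have h24 : SemiconjBy (α 6 ^ 2) (σ 2) (σ 4) :=
    BraidGroup.semiconjBy_α_pow_σ (by norm_num) (by norm_num)
  calc (σ 1 : BraidGroup 6) * (σ 4)⁻¹
      = ((σ 1 * (σ 3)⁻¹) ^ 9)⁻¹ * ((σ 3 ^ 9)⁻¹ * (σ 4)⁻¹ * σ 3 ^ 10) * (σ 1 * (σ 3)⁻¹) ^ 10 :=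
        (mul_inv_pow_conj_eq_of_commute (BraidGroup.commute_σ_σ le_rfl le_rfl (by norm_num))
          (BraidGroup.commute_σ_σ le_rfl (by norm_num) (by norm_num)).inv_right 9).symm
    _ = _ := by rw [← conj_mul_inv_eq_of_semiconjBy h13 h24 9]; group
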